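/- Let F be a functor from rings to a category 𝔇 and A a ring such that F is M₂-stable on both A and M₂A. Let B be a ring containing A as a subring, and let V, W ∈ B satisfy W·A ⊆ A, A·V ⊆ A, and aVWa' = aa' for all a, a' ∈ A. Then φ^{V,W} : A → A, a ↦ WaV, is a ring homomorphism and F(φ^{V,W}) is the identity map of F(A). -/

import Mathlib

/-!
Statement 1.  Let `F` be a functor from rings to a category `𝔇` and `A` a ring
such that `F` is `M₂`-stable on both `A` and `M₂A`.  Let `B` be a ring
containing `A` as a subring, and let `V, W ∈ B` satisfy `W·A ⊆ A`, `A·V ⊆ A`,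
and `aVWa' = aa'` for all `a, a' ∈ A`.  Then `φ^{V,W} : A → A`, `a ↦ WaV`, is
a ring homomorphism and `F(φ^{V,W})` is the identity map of `F(A)`.

Here "rings" means not necessarily unital rings with (not necessarily unital)
ring homomorphisms; the subring `A ⊆ B` is a non-unital subring.
-/

set_option autoImplicit false
noncomputable section

open CategoryTheory

/-- `M₂A`: the ring of 2×2 matrices over `A`. -/
abbrev M2 (A : Type) [NonUnitalRing A] : Type := Matrix (Fin 2) (Fin 2) A

/-- The corner inclusion `ι₀ : A → M₂A`, `a ↦ a·e₁₁`. -/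
def iota0 (A : Type) [NonUnitalRing A] : A →ₙ+* M2 A where
  toFun a := Matrix.single 0 0 a
  map_mul' := by
    intro a b
    simpa using (Matrix.single_mul_single_same (0 : Fin 2) 0 (0 : Fin 2) a b).symm
  map_zero' := by simp
  map_add' := by intro a b; ext i j; simp [Matrix.single]; aesop

/-- A functor from the category of (not necessarily unital) rings to a
category `𝔇`. -/
structure RingFunctor (D : Type*) [Category D] where
  obj : (A : Type) → [NonUnitalRing A] → D
  map : {A B : Type} → [NonUnitalRing A] → [NonUnitalRing B] →
    (A →ₙ+* B) → (obj A ⟶ obj B)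
  map_id : ∀ (A : Type) [NonUnitalRing A],
    map (NonUnitalRingHom.id A) = 𝟙 (obj A)
  map_comp : ∀ {A B C : Type} [NonUnitalRing A] [NonUnitalRing B]
    [NonUnitalRing C] (f : A →ₙ+* B) (g : B →ₙ+* C),
    map (g.comp f) = map f ≫ map g

/-- `F` is `M₂`-stable on `A` if it sends the corner inclusion
`ι₀ : A → M₂A` to an isomorphism. -/
def RingFunctor.M2Stable {D : Type*} [Category D] (F : RingFunctor D)
    (A : Type) [NonUnitalRing A] : Prop :=
  IsIso (F.map (iota0 A))


/-!
Multiplying a 2×2 matrix on the left by `diag(1, W)` and on the right by `diag(1, V)` is a ring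
endomorphism `Ψ` of `M₂A`, because `V W` acts as the identity between elements of `A`.
`Ψ` fixes the upper corner inclusion `ι₀`, so `F Ψ = 1` as `F ι₀` is an isomorphism, and on the
lower corner inclusion `ι₁` it restricts to `φ^{V,W}`: `Ψ ∘ ι₁ = ι₁ ∘ φ^{V,W}`. Since `ι₁` is `ι₀`
followed by the automorphism swapping the two coordinates, `F ι₁` is an isomorphism as well,
hence `F φ^{V,W} = 1`.
-/

namespace RingFunctor

variable {D : Type*} [Category D] (F : RingFunctor D)

lemma map_ringEquiv_comp_map_symm {A B : Type} [NonUnitalRing A] [NonUnitalRing B]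
    (e : A ≃+* B) : F.map (e : A →ₙ+* B) ≫ F.map (e.symm : B →ₙ+* A) = 𝟙 (F.obj A) := by
  rw [← F.map_comp, ← F.map_id]
  congr 1
  ext a
  exact e.symm_apply_apply a

lemma isIso_map_ringEquiv {A B : Type} [NonUnitalRing A] [NonUnitalRing B] (e : A ≃+* B) :
    IsIso (F.map (e : A →ₙ+* B)) :=
  ⟨F.map (e.symm : B →ₙ+* A), F.map_ringEquiv_comp_map_symm e,
    F.map_ringEquiv_comp_map_symm e.symm⟩

lemma map_eq_id_of_intertwine {A M : Type} [NonUnitalRing A] [NonUnitalRing M]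
    (f : A →ₙ+* A) (g : M →ₙ+* M) (i j : A →ₙ+* M) [Epi (F.map i)] [Mono (F.map j)]
    (hi : g.comp i = i) (hj : g.comp j = j.comp f) : F.map f = 𝟙 (F.obj A) := by
  have hg : F.map g = 𝟙 (F.obj M) := by
    rw [← cancel_epi (F.map i), ← F.map_comp, hi, Category.comp_id]
  rw [← cancel_mono (F.map j), ← F.map_comp, ← hj, F.map_comp, hg, Category.comp_id,
    Category.id_comp]

end RingFunctor

namespace NonUnitalSubring

variable {B : Type} [NonUnitalRing B]

def rowTwist (W : B) (t : Prop) [Decidable t] : B →+ B :=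
  if t then AddMonoidHom.mulLeft W else AddMonoidHom.id B

def colTwist (V : B) (t : Prop) [Decidable t] : B →+ B :=
  if t then AddMonoidHom.mulRight V else AddMonoidHom.id B

/-- The matrix `diag(w) * x * diag(v)`, where `w i = W` and `v i = V` for `p i`, and both are
`1` otherwise (`B` need not have a unit, hence the case split). -/
def twistMatrix {n : Type} (W V : B) (p : n → Prop) [DecidablePred p] (x : Matrix n n B) :
    Matrix n n B :=
  Matrix.of fun i j => rowTwist W (p i) (colTwist V (p j) (x i j))

section Twist

variable {V W : B} (t : Prop) [Decidable t]

lemma rowTwist_mul (b c : B) : rowTwist W t b * c = rowTwist W t (b * c) := by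
  by_cases t <;> simp [rowTwist, *, mul_assoc]

lemma mul_colTwist (b c : B) : b * colTwist V t c = colTwist V t (b * c) := by
  by_cases t <;> simp [colTwist, *, mul_assoc]

lemma twistMatrix_single {n : Type} [DecidableEq n] (p : n → Prop) [DecidablePred p]
    (i j : n) (b : B) :
    twistMatrix W V p (Matrix.single i j b) =
      Matrix.single i j (rowTwist W (p i) (colTwist V (p j) b)) := by
  ext i' j'
  by_cases hi : i = i' <;> by_cases hj : j = j' <;> simp [twistMatrix, Matrix.single_apply, *]

end Twist

variable (A : NonUnitalSubring B) {V W : B}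

lemma rowTwist_mem (hWA : ∀ a : B, a ∈ A → W * a ∈ A) (t : Prop) [Decidable t] {b : B}
    (hb : b ∈ A) : rowTwist W t b ∈ A := by
  by_cases t <;> simp [rowTwist, *]

lemma colTwist_mem (hAV : ∀ a : B, a ∈ A → a * V ∈ A) (t : Prop) [Decidable t] {b : B}
    (hb : b ∈ A) : colTwist V t b ∈ A := by
  by_cases t <;> simp [colTwist, *]

lemma colTwist_mul_rowTwist (hVW : ∀ a a' : B, a ∈ A → a' ∈ A → a * V * (W * a') = a * a')
    (t : Prop) [Decidable t] {b c : B} (hb : b ∈ A) (hc : c ∈ A) :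
    colTwist V t b * rowTwist W t c = b * c := by
  by_cases t <;> simp [rowTwist, colTwist, *]

lemma twistMatrix_mul (hAV : ∀ a : B, a ∈ A → a * V ∈ A)
    (hVW : ∀ a a' : B, a ∈ A → a' ∈ A → a * V * (W * a') = a * a')
    {n : Type} [Fintype n] (p : n → Prop) [DecidablePred p]
    {x y : Matrix n n B} (hx : ∀ i j, x i j ∈ A) (hy : ∀ i j, y i j ∈ A) :
    twistMatrix W V p (x * y) = twistMatrix W V p x * twistMatrix W V p y := by
  ext i j
  simp only [twistMatrix, Matrix.of_apply, Matrix.mul_apply, map_sum]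
  refine Finset.sum_congr rfl fun k _ => ?_
  rw [rowTwist_mul, colTwist_mul_rowTwist A hVW _ (hx i k) (colTwist_mem A hAV _ (hy k j)),
    mul_colTwist]

variable (hWA : ∀ a : B, a ∈ A → W * a ∈ A) (hAV : ∀ a : B, a ∈ A → a * V ∈ A)
  (hVW : ∀ a a' : B, a ∈ A → a' ∈ A → a * V * (W * a') = a * a')

def sandwichHom : A →ₙ+* A where
  toFun a := ⟨W * a * V, hAV _ (hWA _ a.2)⟩
  map_mul' a b := Subtype.ext <| by
    change W * (a * b) * V = W * a * V * (W * b * V)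
    rw [← mul_assoc (W * a * V), hVW _ _ (hWA _ a.2) b.2]
    simp only [mul_assoc]
  map_zero' := Subtype.ext <| by simp
  map_add' a b := Subtype.ext <| by simp [mul_add, add_mul]

@[simp]
lemma coe_sandwichHom (a : A) : (sandwichHom A hWA hAV hVW a : B) = W * a * V :=
  rfl

variable {n : Type} [Fintype n] (p : n → Prop) [DecidablePred p]

def twistHom : Matrix n n A →ₙ+* Matrix n n A where
  toFun x := Matrix.of fun i j => ⟨twistMatrix W V p (x.map (↑)) i j,
    rowTwist_mem A hWA _ (colTwist_mem A hAV _ (x i j).2)⟩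
  map_mul' x y := by
    apply Matrix.map_injective Subtype.coe_injective
    let ι := NonUnitalSubringClass.subtype A
    change twistMatrix W V p ((x * y).map ι) =
      Matrix.map (Matrix.of (fun i j => _) * Matrix.of (fun i j => _)) ι
    rw [Matrix.map_mul, Matrix.map_mul]
    exact twistMatrix_mul A hAV hVW p (fun i j => (x i j).2) (fun i j => (y i j).2)
  map_zero' := by ext; simp [twistMatrix]
  map_add' x y := by ext; simp [twistMatrix]

lemma map_twistHom (x : Matrix n n A) :
    (twistHom A hWA hAV hVW p x).map (NonUnitalSubringClass.subtype A) =
      twistMatrix W V p (x.map (NonUnitalSubringClass.subtype A)) :=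
  rfl

variable [DecidableEq n]

lemma twistHom_single_of_not {i j : n} (hi : ¬p i) (hj : ¬p j) (a : A) :
    twistHom A hWA hAV hVW p (Matrix.single i j a) = Matrix.single i j a := by
  refine Matrix.map_injective (NonUnitalSubringClass.subtype_injective A) ?_
  beta_reduce
  rw [map_twistHom, Matrix.map_single, twistMatrix_single]
  simp [rowTwist, colTwist, hi, hj]

lemma twistHom_single_of {i j : n} (hi : p i) (hj : p j) (a : A) :
    twistHom A hWA hAV hVW p (Matrix.single i j a) =
      Matrix.single i j (sandwichHom A hWA hAV hVW a) := by
  refine Matrix.map_injective (NonUnitalSubringClass.subtype_injective A) ?_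
  beta_reduce
  rw [map_twistHom, Matrix.map_single, Matrix.map_single, twistMatrix_single]
  simp [rowTwist, colTwist, hi, hj, mul_assoc]

end NonUnitalSubring

open NonUnitalSubring in
theorem phiVW_ringHom_and_F_identity_general
    {D : Type*} [Category D] (F : RingFunctor D)
    (B : Type) [NonUnitalRing B] (A : NonUnitalSubring B)
    (h₁ : F.M2Stable A)
    (V W : B)
    (hWA : ∀ a : B, a ∈ A → W * a ∈ A)
    (hAV : ∀ a : B, a ∈ A → a * V ∈ A)
    (hVW : ∀ a a' : B, a ∈ A → a' ∈ A → a * V * (W * a') = a * a') :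
    ∃ φ : A →ₙ+* A,
      (∀ a : A, (φ a : B) = W * (a : B) * V) ∧
      F.map φ = 𝟙 (F.obj A) := by
  have : IsIso (F.map (iota0 A)) := h₁
  let swap : M2 A ≃+* M2 A := Matrix.reindexRingEquiv A (Equiv.swap 0 1)
  let iota1 := (swap : M2 A →ₙ+* M2 A).comp (iota0 A)
  have : IsIso (F.map (swap : M2 A →ₙ+* M2 A)) := F.isIso_map_ringEquiv swap
  have : IsIso (F.map iota1) := by rw [F.map_comp]; infer_instance
  let p : Fin 2 → Prop := (· = 1)
  refine ⟨sandwichHom A hWA hAV hVW, coe_sandwichHom A hWA hAV hVW,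
    F.map_eq_id_of_intertwine _ (twistHom A hWA hAV hVW p) (iota0 A) iota1 ?_ ?_⟩
  · ext a : 1
    exact twistHom_single_of_not A hWA hAV hVW p (by decide) (by decide) a
  · ext a : 1
    change twistHom A hWA hAV hVW p ((Matrix.single 0 0 a).submatrix _ _) =
      (Matrix.single 0 0 _).submatrix _ _
    simp only [Matrix.submatrix_single_equiv]
    exact twistHom_single_of A hWA hAV hVW p rfl rfl a

theorem phiVW_ringHom_and_F_identity
    {D : Type*} [Category D] (F : RingFunctor D)
    (B : Type) [NonUnitalRing B] (A : NonUnitalSubring B)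
    (h₁ : F.M2Stable A) (h₂ : F.M2Stable (M2 A))
    (V W : B)
    (hWA : ∀ a : B, a ∈ A → W * a ∈ A)
    (hAV : ∀ a : B, a ∈ A → a * V ∈ A)
    (hVW : ∀ a a' : B, a ∈ A → a' ∈ A → a * V * (W * a') = a * a') :
    ∃ φ : A →ₙ+* A,
      (∀ a : A, (φ a : B) = W * (a : B) * V) ∧
      F.map φ = 𝟙 (F.obj A) :=
  phiVW_ringHom_and_F_identity_general F B A h₁ V W hWA hAV hVW

end
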